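/- arXiv:1307.0093 — 4 statements merged into one kernel-verified Lean document; each statement's English description precedes it below -/
import Mathlib

section
/- Consider the one-dimensional sweeping model with N cells indexed periodically (j ∈ ZMod N), states z_j ∈ {-1,1}, fluxes Ψ_{j+1/2} = ρ_j·max(z_j,0) + ρ_{j+1}·min(z_{j+1},0), and update ρ'_j = ρ_j + NΔt·(Ψ_{j-1/2} − Ψ_{j+1/2}). If the CFL condition N·Δt ≤ 1/2 holds and ρ_j ≥ 0 for all j, then ρ'_j ≥ 0 for all j. -/
/-- Positivity preservation for the one-dimensional periodic sweeping model:
with states `z j ∈ {-1,1}`, fluxes `Ψ j = ρ j * max (z j) 0 + ρ (j+1) * min (z (j+1)) 0`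
and update `ρ' j = ρ j + N·Δt·(Ψ (j-1) - Ψ j)`, under the CFL condition `N·Δt ≤ 1/2`,
nonnegativity of the densities is preserved. -/
theorem sweeping_1d_positivity (N : ℕ) [NeZero N] (Δt : ℝ) (hΔt : 0 < Δt)
    (z ρ ρ' Ψ : ZMod N → ℝ)
    (hz : ∀ j, z j = 1 ∨ z j = -1)
    (hΨ : ∀ j, Ψ j = ρ j * max (z j) 0 + ρ (j + 1) * min (z (j + 1)) 0)
    (hρ' : ∀ j, ρ' j = ρ j + (N : ℝ) * Δt * (Ψ (j - 1) - Ψ j))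
    (hCFL : (N : ℝ) * Δt ≤ 1 / 2)
    (hρ : ∀ j, 0 ≤ ρ j) :
    ∀ j, 0 ≤ ρ' j := by
  intro j
  have h1 := hρ (j - 1)
  have h2 := hρ j
  have h3 := hρ (j + 1)
  have hN : (0:ℝ) < (N:ℝ) * Δt := by
    have : (0:ℝ) < (N:ℝ) := by exact_mod_cast Nat.pos_of_ne_zero (NeZero.ne N)
    positivity
  rw [hρ' j, hΨ (j - 1), hΨ j, sub_add_cancel]
  rcases hz (j - 1) with ha | ha <;> rcases hz j with hb | hb <;>
    rcases hz (j + 1) with hc | hc <;> rw [ha, hb, hc] <;> norm_num <;> nlinarith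
end

section
/- Consider the sweeping model on a finite graph with node set 𝒥 of cardinality J, neighbor sets 𝒩_j, node states z_j ∈ 𝒩_j, fluxes Ψ_{jk} = ρ_j·δ_{z_j,k} − ρ_k·δ_{z_k,j}, and update ρ'_j = ρ_j − JΔt·Σ_{k ∈ 𝒩_j} Ψ_{jk}. Let d = max_{j ∈ 𝒥} d_j be the maximal node degree. If the CFL condition J·Δt ≤ 1/d holds and ρ_j ≥ 0 for all j ∈ 𝒥, then ρ'_j ≥ 0 for all j ∈ 𝒥. -/
/-- Positivity preservation for the sweeping model on a finite graph:
with node states `z j ∈ 𝒩 j`, fluxes `Ψ j k = ρ j · δ_{z j, k} - ρ k · δ_{z k, j}`,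
update `ρ' j = ρ j - J·Δt·∑_{k ∈ 𝒩 j} Ψ j k`, and `d` the maximal node degree,
under the CFL condition `J·Δt ≤ 1/d`, nonnegativity of the densities is preserved. -/
theorem sweeping_network_positivity {V : Type*} [Fintype V] [DecidableEq V]
    (G : SimpleGraph V) [DecidableRel G.Adj] (Δt : ℝ) (hΔt : 0 < Δt)
    (z : V → V) (hz : ∀ j, G.Adj j (z j))
    (ρ ρ' : V → ℝ) (Ψ : V → V → ℝ)
    (hΨ : ∀ j k, Ψ j k =
      ρ j * (if z j = k then 1 else 0) - ρ k * (if z k = j then 1 else 0))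
    (hρ' : ∀ j, ρ' j = ρ j - (Fintype.card V : ℝ) * Δt * ∑ k ∈ G.neighborFinset j, Ψ j k)
    (d : ℕ) (hd : d = Finset.univ.sup fun j => G.degree j)
    (hCFL : (Fintype.card V : ℝ) * Δt ≤ 1 / (d : ℝ))
    (hρ : ∀ j, 0 ≤ ρ j) :
    ∀ j, 0 ≤ ρ' j := by
  intro j
  have hzj : z j ∈ G.neighborFinset j := by
    rw [SimpleGraph.mem_neighborFinset]; exact hz j
  -- split the sum
  have hsum : ∑ k ∈ G.neighborFinset j, Ψ j k
      = ρ j - ∑ k ∈ G.neighborFinset j, ρ k * (if z k = j then 1 else 0) := by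
    simp only [hΨ, Finset.sum_sub_distrib]
    congr 1
    rw [Finset.sum_congr rfl (fun k _ => by rw [mul_ite, mul_one, mul_zero]),
      Finset.sum_ite_eq (G.neighborFinset j) (z j) (fun k => ρ j), if_pos hzj]
  have hS : 0 ≤ ∑ k ∈ G.neighborFinset j, ρ k * (if z k = j then 1 else 0) := by
    apply Finset.sum_nonneg
    intro k _
    have := hρ k
    positivity
  -- d ≥ 1
  have hd1 : (1 : ℕ) ≤ d := by
    rw [hd]
    calc (1:ℕ) ≤ G.degree j := by
          rw [← SimpleGraph.card_neighborFinset_eq_degree]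
          exact Finset.card_pos.mpr ⟨z j, hzj⟩
      _ ≤ _ := Finset.le_sup (f := fun j => G.degree j) (Finset.mem_univ j)
  have hdr : (1:ℝ) ≤ (d:ℝ) := by exact_mod_cast hd1
  have hJΔt1 : (Fintype.card V : ℝ) * Δt ≤ 1 := by
    calc (Fintype.card V : ℝ) * Δt ≤ 1 / (d:ℝ) := hCFL
      _ ≤ 1 := by rw [div_le_one (by linarith)]; exact hdr
  have hJΔt0 : 0 ≤ (Fintype.card V : ℝ) * Δt := by positivity
  rw [hρ' j, hsum]
  have := hρ j
  nlinarith [mul_nonneg hJΔt0 hS]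
end

section
/- Let N ≥ 1, z ∈ {-1,1}^N, q_1,…,q_N ∈ [0,1], and let Z' be obtained from z by flipping each coordinate j independently with probability q_j. Then for every φ : {-1,1}^N → ℝ with |φ| ≤ M everywhere, | E[φ(Z')] − φ(z) − Σ_{j=1}^N q_j·(φ(σ_j z) − φ(z)) | ≤ 4·M·(Σ_{j=1}^N q_j)², where σ_j z is the configuration obtained from z by flipping only coordinate j. -/
/-!
Let `w ε = ∏ⱼ (if ε j then q j else 1 - q j)` be the probability of the flip pattern `ε` and
`S = ∑ⱼ q j`. The one-flip approximation puts the signed weight `1 - S` on the empty pattern and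
`q j` on the pattern flipping only `j`. The Weierstrass product inequality
`∏ (1 - qₖ) ≥ 1 - ∑ qₖ` gives `w ∅ ≥ 1 - S` and `q j (1 - S) ≤ w {j} ≤ q j`, while the patterns
with two or more flips carry mass `1 - w ∅ - ∑ⱼ w {j}`. Adding up the termwise discrepancies,
the error is at most `2 M (S - ∑ⱼ w {j}) ≤ 2 M S²`.
-/

open MeasureTheory Finset

theorem one_sub_sum_le_prod_one_sub {ι : Type*} (s : Finset ι) {q : ι → ℝ}
    (hq0 : ∀ i ∈ s, 0 ≤ q i) (hq1 : ∀ i ∈ s, q i ≤ 1) :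
    1 - ∑ i ∈ s, q i ≤ ∏ i ∈ s, (1 - q i) := by
  induction s using Finset.cons_induction with
  | empty => simp
  | cons a s _ ih =>
    simp only [forall_mem_cons] at hq0 hq1
    rw [prod_cons, sum_cons]
    have hs := ih hq0.2 hq1.2
    have : 0 ≤ ∑ i ∈ s, q i := sum_nonneg hq0.2
    nlinarith [mul_le_mul_of_nonneg_left hs (sub_nonneg.2 hq1.1)]

noncomputable def flipMeasure (p : ℝ) : Measure Bool :=
  ENNReal.ofReal p • Measure.dirac true + ENNReal.ofReal (1 - p) • Measure.dirac false

instance (p : ℝ) : IsFiniteMeasure (flipMeasure p) :=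
  ⟨by simp [flipMeasure]⟩

theorem flipMeasure_real_singleton {p : ℝ} (hp0 : 0 ≤ p) (hp1 : p ≤ 1) (b : Bool) :
    (flipMeasure p).real {b} = if b then p else 1 - p := by
  cases b <;> simp [flipMeasure, measureReal_def, hp0, hp1]

section IndependentFlips

variable {ι : Type*} [Fintype ι]

def flipWeight (q : ι → ℝ) (ε : ι → Bool) : ℝ :=
  ∏ j, if ε j then q j else 1 - q j

variable {q : ι → ℝ}

theorem flipWeight_nonneg (hq0 : ∀ j, 0 ≤ q j) (hq1 : ∀ j, q j ≤ 1) (ε : ι → Bool) :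
    0 ≤ flipWeight q ε :=
  prod_nonneg fun j _ => by split <;> linarith [hq0 j, hq1 j]

theorem measureReal_pi_flipMeasure_singleton (hq0 : ∀ j, 0 ≤ q j) (hq1 : ∀ j, q j ≤ 1)
    (ε : ι → Bool) :
    (Measure.pi fun j => flipMeasure (q j)).real {ε} = flipWeight q ε := by
  rw [measureReal_def, Measure.pi_singleton, ENNReal.toReal_prod]
  exact prod_congr rfl fun j _ => flipMeasure_real_singleton (hq0 j) (hq1 j) (ε j)

theorem one_sub_sum_le_flipWeight_const_false (hq0 : ∀ j, 0 ≤ q j) (hq1 : ∀ j, q j ≤ 1) :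
    1 - ∑ k, q k ≤ flipWeight q (fun _ => false) := by
  simpa [flipWeight] using one_sub_sum_le_prod_one_sub univ (fun k _ => hq0 k) fun k _ => hq1 k

variable [DecidableEq ι]

theorem sum_flipWeight (q : ι → ℝ) : ∑ ε, flipWeight q ε = 1 := by
  simp only [flipWeight, ← Fintype.prod_sum (fun j (b : Bool) => if b then q j else 1 - q j)]
  simp

theorem integral_pi_flipMeasure (hq0 : ∀ j, 0 ≤ q j) (hq1 : ∀ j, q j ≤ 1)
    (g : (ι → Bool) → ℝ) :
    ∫ ε, g ε ∂(Measure.pi fun j => flipMeasure (q j)) = ∑ ε, flipWeight q ε * g ε := by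
  simp [integral_fintype (f := g) .of_finite, measureReal_pi_flipMeasure_singleton hq0 hq1]

theorem flipWeight_single (j : ι) :
    flipWeight q (fun k => decide (k = j)) = q j * ∏ k ∈ {j}ᶜ, (1 - q k) := by
  rw [flipWeight, Fintype.prod_eq_mul_prod_compl j]
  simp only [decide_true, if_true]
  congr 1
  exact prod_congr rfl fun k hk => by simp [show k ≠ j by simpa using hk]

theorem flipWeight_single_le (hq0 : ∀ j, 0 ≤ q j) (hq1 : ∀ j, q j ≤ 1) (j : ι) :
    flipWeight q (fun k => decide (k = j)) ≤ q j := by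
  rw [flipWeight_single]
  exact mul_le_of_le_one_right (hq0 j)
    (prod_le_one (fun k _ => sub_nonneg.2 (hq1 k)) fun k _ => sub_le_self 1 (hq0 k))

theorem mul_one_sub_sum_le_flipWeight_single (hq0 : ∀ j, 0 ≤ q j) (hq1 : ∀ j, q j ≤ 1)
    (j : ι) : q j * (1 - ∑ k, q k) ≤ flipWeight q (fun k => decide (k = j)) := by
  rw [flipWeight_single]
  refine mul_le_mul_of_nonneg_left ?_ (hq0 j)
  calc 1 - ∑ k, q k ≤ 1 - ∑ k ∈ {j}ᶜ, q k :=
        sub_le_sub_left (sum_le_univ_sum_of_nonneg hq0) 1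
    _ ≤ ∏ k ∈ {j}ᶜ, (1 - q k) :=
        one_sub_sum_le_prod_one_sub _ (fun k _ => hq0 k) fun k _ => hq1 k

variable (ι) in
def atMostOneFlip : Option ι ↪ (ι → Bool) where
  toFun
    | none => fun _ => false
    | some j => fun k => decide (k = j)
  inj' := by
    rintro (_ | i) (_ | j) h <;> simp_all [funext_iff]

theorem sum_eq_noFlip_add_sum_singleFlip_add_sum_compl (g : (ι → Bool) → ℝ) :
    ∑ ε, g ε = g (fun _ => false) + ∑ j, g (fun k => decide (k = j))
      + ∑ ε ∈ (univ.map (atMostOneFlip ι))ᶜ, g ε := by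
  rw [← sum_add_sum_compl (univ.map (atMostOneFlip ι)), sum_map, Fintype.sum_option]
  rfl

theorem abs_sum_flipWeight_mul_sub_le (hq0 : ∀ j, 0 ≤ q j) (hq1 : ∀ j, q j ≤ 1)
    {M : ℝ} (f : (ι → Bool) → ℝ) (hf : ∀ ε, |f ε| ≤ M) :
    |∑ ε, flipWeight q ε * f ε - f (fun _ => false)
        - ∑ j, q j * (f (fun k => decide (k = j)) - f (fun _ => false))|
      ≤ 2 * M * (∑ j, q j) ^ 2 := by
  set S := ∑ j, q j
  set w := flipWeight q
  set e₀ : ι → Bool := fun _ => false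
  set e : ι → ι → Bool := fun j k => decide (k = j)
  set B := (univ.map (atMostOneFlip ι))ᶜ
  have hM : 0 ≤ M := (abs_nonneg _).trans (hf e₀)
  have hmass : w e₀ + ∑ j, w (e j) + ∑ ε ∈ B, w ε = 1 := by
    rw [← sum_eq_noFlip_add_sum_singleFlip_add_sum_compl, sum_flipWeight]
  have hsplit : ∑ ε, w ε * f ε - f e₀ - ∑ j, q j * (f (e j) - f e₀)
      = (w e₀ - (1 - S)) * f e₀ + ∑ j, (w (e j) - q j) * f (e j) + ∑ ε ∈ B, w ε * f ε := by
    rw [sum_eq_noFlip_add_sum_singleFlip_add_sum_compl (fun ε => w ε * f ε)]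
    simp only [sub_mul, mul_sub, sum_sub_distrib, ← sum_mul]
    ring
  have hw_nonneg := flipWeight_nonneg hq0 hq1
  have hnoFlip : 0 ≤ w e₀ - (1 - S) := sub_nonneg.2 (one_sub_sum_le_flipWeight_const_false hq0 hq1)
  have hsingle (j : ι) : |w (e j) - q j| = q j - w (e j) := by
    rw [abs_sub_comm, abs_of_nonneg (sub_nonneg.2 (flipWeight_single_le hq0 hq1 j))]
  have hsingles : S * (1 - S) ≤ ∑ j, w (e j) := by
    rw [sum_mul]
    exact sum_le_sum fun j _ => mul_one_sub_sum_le_flipWeight_single hq0 hq1 j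
  have hrest : |∑ ε ∈ B, w ε * f ε| ≤ (∑ ε ∈ B, w ε) * M := by
    rw [sum_mul]
    refine (abs_sum_le_sum_abs _ _).trans (sum_le_sum fun ε _ => ?_)
    rw [abs_mul, abs_of_nonneg (hw_nonneg ε)]
    exact mul_le_mul_of_nonneg_left (hf ε) (hw_nonneg ε)
  rw [hsplit]
  calc _ ≤ |(w e₀ - (1 - S)) * f e₀| + ∑ j, |(w (e j) - q j) * f (e j)|
        + |∑ ε ∈ B, w ε * f ε| :=
        (abs_add_three _ _ _).trans (by gcongr; exact abs_sum_le_sum_abs _ _)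
    _ ≤ (w e₀ - (1 - S)) * M + ∑ j, (q j - w (e j)) * M + (∑ ε ∈ B, w ε) * M := by
        simp only [abs_mul, abs_of_nonneg hnoFlip, hsingle]
        gcongr with j
        · exact hf e₀
        · linarith [flipWeight_single_le hq0 hq1 j]
        · exact hf (e j)
    _ = 2 * M * (S - ∑ j, w (e j)) := by
        rw [← sum_mul, sum_sub_distrib]
        linear_combination M * hmass
    _ ≤ 2 * M * S ^ 2 := by gcongr; linarith

end IndependentFlips

theorem expectation_independent_flips_one_flip_approx_general (N : ℕ)
    (z : Fin N → ℝ)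
    (q : Fin N → ℝ) (hq0 : ∀ j, 0 ≤ q j) (hq1 : ∀ j, q j ≤ 1)
    (φ : (Fin N → ℝ) → ℝ) (M : ℝ) (hM : ∀ y, |φ y| ≤ M) :
    |(∫ ε : Fin N → Bool,
          φ (fun j => if ε j then -z j else z j)
          ∂(Measure.pi fun j =>
              ENNReal.ofReal (q j) • Measure.dirac true
                + ENNReal.ofReal (1 - q j) • Measure.dirac false))
        - φ z
        - ∑ j, q j * (φ (Function.update z j (-z j)) - φ z)|
      ≤ 4 * M * (∑ j, q j) ^ 2 := by
  set f : (Fin N → Bool) → ℝ := fun ε => φ (fun j => if ε j then -z j else z j)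
  have hf_none : f (fun _ => false) = φ z := rfl
  have hf_single (j : Fin N) : f (fun k => decide (k = j)) = φ (Function.update z j (-z j)) := by
    simp only [f, decide_eq_true_eq]
    congr 1
    ext k
    by_cases hk : k = j <;> simp [hk]
  change |∫ ε, f ε ∂(Measure.pi fun j => flipMeasure (q j)) - φ z - _| ≤ _
  rw [integral_pi_flipMeasure hq0 hq1, ← hf_none]
  simp only [← hf_single]
  calc _ ≤ 2 * M * (∑ j, q j) ^ 2 := abs_sum_flipWeight_mul_sub_le hq0 hq1 f fun ε => hM _
    _ ≤ 4 * M * (∑ j, q j) ^ 2 := by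
        have : 0 ≤ M := (abs_nonneg _).trans (hM z)
        gcongr
        norm_num

/-- Quantitative one-flip approximation of the expectation of `φ` under independent coordinate
flips: if `|φ| ≤ M`, then the expectation of `φ(Z')`, where `Z'` is obtained from `z` by flipping
each coordinate `j` independently with probability `q j`, differs from
`φ(z) + ∑ j, q j·(φ(σ_j z) - φ(z))` by at most `4·M·(∑ j, q j)²`. -/
theorem expectation_independent_flips_one_flip_approx (N : ℕ) (hN : 1 ≤ N)
    (z : Fin N → ℝ) (hz : ∀ j, z j = 1 ∨ z j = -1)
    (q : Fin N → ℝ) (hq0 : ∀ j, 0 ≤ q j) (hq1 : ∀ j, q j ≤ 1)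
    (φ : (Fin N → ℝ) → ℝ) (M : ℝ) (hM : ∀ y, |φ y| ≤ M) :
    |(∫ ε : Fin N → Bool,
          φ (fun j => if ε j then -z j else z j)
          ∂(Measure.pi fun j =>
              ENNReal.ofReal (q j) • Measure.dirac true
                + ENNReal.ofReal (1 - q j) • Measure.dirac false))
        - φ z
        - ∑ j, q j * (φ (Function.update z j (-z j)) - φ z)|
      ≤ 4 * M * (∑ j, q j) ^ 2 :=
  expectation_independent_flips_one_flip_approx_general N z q hq0 hq1 φ M hM
end

section
/- Let b > 0 and γ₀ > b, and let u : [0,∞) → ℝ be differentiable with u'(t) = 2u(t)·(b − γ₀ − b·u(t)²) for all t ≥ 0. Then u(t) → 0 as t → ∞. -/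
/-!
Along a solution, `(u²)' = 4u²(b - γ₀) - 4bu⁴ ≤ -4(γ₀ - b)u²`. Hence `exp (4(γ₀ - b)t) · u(t)²`
has nonpositive derivative, so `u(t)² ≤ u(0)² exp (-4(γ₀ - b)t) → 0`.
-/

open Filter Real Set

theorem le_mul_exp_neg_of_hasDerivAt_le_neg_mul {v v' : ℝ → ℝ} {c : ℝ}
    (hv : ∀ t, 0 ≤ t → HasDerivAt v (v' t) t) (hle : ∀ t, 0 ≤ t → v' t ≤ -c * v t)
    {t : ℝ} (ht : 0 ≤ t) : v t ≤ v 0 * exp (-(c * t)) := by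
  have hw : ∀ s, 0 ≤ s →
      HasDerivAt (fun s => exp (c * s) * v s) (exp (c * s) * (c * v s + v' s)) s := by
    intro s hs
    have h := ((hasDerivAt_id s).const_mul c).exp.fun_mul (hv s hs)
    simp only [id, mul_one] at h
    exact h.congr_deriv (by ring)
  have hanti : AntitoneOn (fun s => exp (c * s) * v s) (Ici 0) := by
    refine antitoneOn_of_hasDerivWithinAt_nonpos (convex_Ici 0)
      (fun s hs => (hw s hs).continuousAt.continuousWithinAt)
      (fun s hs => (hw s (interior_subset hs)).hasDerivWithinAt) fun s hs => ?_
    have hs : 0 ≤ s := interior_subset hs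
    nlinarith [exp_pos (c * s), hle s hs]
  have hw_le : exp (c * t) * v t ≤ v 0 := by
    simpa using hanti self_mem_Ici (mem_Ici.mpr ht) ht
  rw [exp_neg, ← div_eq_mul_inv, le_div_iff₀ (exp_pos _)]
  linarith

theorem tendsto_zero_of_hasDerivAt_le_neg_mul {v v' : ℝ → ℝ} {c : ℝ} (hc : 0 < c)
    (hv : ∀ t, 0 ≤ t → HasDerivAt v (v' t) t) (hle : ∀ t, 0 ≤ t → v' t ≤ -c * v t)
    (hv_nonneg : ∀ t, 0 ≤ v t) : Tendsto v atTop (nhds 0) := by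
  have hbound : Tendsto (fun t => v 0 * exp (-(c * t))) atTop (nhds 0) := by
    simpa using (tendsto_exp_atBot.comp
      (tendsto_neg_atTop_atBot.comp (tendsto_id.const_mul_atTop hc))).const_mul (v 0)
  refine tendsto_of_tendsto_of_tendsto_of_le_of_le' tendsto_const_nhds hbound
    (Eventually.of_forall hv_nonneg) ?_
  filter_upwards [eventually_ge_atTop 0] with t ht
  exact le_mul_exp_neg_of_hasDerivAt_le_neg_mul hv hle ht

theorem tendsto_zero_of_sq_tendsto_zero {α : Type*} {l : Filter α} {u : α → ℝ}
    (h : Tendsto (fun t => u t ^ 2) l (nhds 0)) : Tendsto u l (nhds 0) := by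
  rw [tendsto_zero_iff_abs_tendsto_zero]
  simpa [sqrt_sq_eq_abs, Function.comp_def] using h.sqrt

/-- For `0 < b < γ₀`, every solution of the spatially homogeneous velocity equation
`u' = 2u·(b - γ₀ - b·u²)` on `[0,∞)` converges to the disordered state `0` as `t → ∞`. -/
theorem velocity_converges_to_disordered (γ₀ b : ℝ) (hb : 0 < b) (hγ₀ : b < γ₀)
    (u : ℝ → ℝ)
    (hu : ∀ t : ℝ, 0 ≤ t → HasDerivAt u (2 * u t * (b - γ₀ - b * (u t) ^ 2)) t) :
    Tendsto u atTop (nhds 0) := by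
  have hsq : ∀ t, 0 ≤ t → HasDerivAt (fun s => u s ^ 2)
      (2 * u t * (2 * u t * (b - γ₀ - b * u t ^ 2))) t := by
    intro t ht
    simpa using (hu t ht).fun_pow 2
  have hdecay : ∀ t, 0 ≤ t →
      2 * u t * (2 * u t * (b - γ₀ - b * u t ^ 2)) ≤ -(4 * (γ₀ - b)) * u t ^ 2 := by
    intro t _
    nlinarith [mul_nonneg hb.le (pow_nonneg (sq_nonneg (u t)) 2)]
  exact tendsto_zero_of_sq_tendsto_zero <|
    tendsto_zero_of_hasDerivAt_le_neg_mul (by linarith) hsq hdecay fun t => sq_nonneg (u t)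
end
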